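/- arXiv:1312.2363 — 4 statements merged into one kernel-verified Lean document; each statement's English description precedes it below -/
import Mathlib

section
/- Nonnegativity of the generalized Rényi divergence for all admissible orders: for every real α with α ≠ 0 and α ≠ 1 (including negative α), R_α(p ‖ q) ≥ 0. -/
/-!
With `r = q / p`, the argument of the logarithm compares `∑ p r^(1-α)` with
`(∑ p)^α (∑ p r)^(1-α)`, i.e. the `p`-weighted mean of `r^(1-α)` with the `(1-α)`-th power of
the `p`-weighted mean of `r`. By Jensen's inequality for `t ↦ t^(1-α)`, which is concave for
`0 < α < 1` and convex for `α < 0`, the logarithm has the sign of `α(1-α)`. For `α > 1` the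
exponent is negative; passing to the weights `p r` and the points `r⁻¹` (the skew symmetry
`R_α(p‖q) = R_(1-α)(q‖p)`) turns it into the convex case with exponent `α`.
-/

/-- Generalized Rényi (alpha-gamma) divergence of order `α` between two
positive mass functions `p q : Fin m → ℝ`, with `r j = q j / p j`. -/
noncomputable def renyiDiv (m : ℕ) (α : ℝ) (p q : Fin m → ℝ) : ℝ :=
  (1 / (α * (1 - α))) *
    Real.log (((∑ j, p j) ^ α * (∑ j, p j * (q j / p j)) ^ (1 - α)) /
      ∑ j, p j * (q j / p j) ^ (1 - α))

open Finset Real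

namespace Real

variable {ι : Type*} {s : Finset ι} {w z : ι → ℝ} {e : ℝ}

lemma rpow_one_sub_mul_rpow_eq_mul_inv_mul_rpow {W a : ℝ} (hW : 0 < W) (ha : 0 ≤ a) :
    W ^ (1 - e) * a ^ e = W * (W⁻¹ * a) ^ e := by
  rw [mul_rpow (inv_nonneg.2 hW.le) ha, inv_rpow hW.le, rpow_sub hW, rpow_one]
  field_simp

lemma rpow_sum_mul_le_sum_mul_rpow_of_one_le (hw : ∀ i ∈ s, 0 ≤ w i) (hW : 0 < ∑ i ∈ s, w i)
    (hz : ∀ i ∈ s, 0 ≤ z i) (he : 1 ≤ e) :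
    (∑ i ∈ s, w i) ^ (1 - e) * (∑ i ∈ s, w i * z i) ^ e ≤ ∑ i ∈ s, w i * z i ^ e := by
  have jensen := (convexOn_rpow he).map_centerMass_le hw hW hz
  simp only [centerMass, smul_eq_mul, Function.comp_def] at jensen
  rw [rpow_one_sub_mul_rpow_eq_mul_inv_mul_rpow hW
    (sum_nonneg fun i hi => mul_nonneg (hw i hi) (hz i hi))]
  calc _ ≤ (∑ i ∈ s, w i) * ((∑ i ∈ s, w i)⁻¹ * ∑ i ∈ s, w i * z i ^ e) := by gcongr
    _ = _ := by field_simp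

lemma sum_mul_rpow_le_rpow_sum_mul_of_le_one (hw : ∀ i ∈ s, 0 ≤ w i) (hW : 0 < ∑ i ∈ s, w i)
    (hz : ∀ i ∈ s, 0 ≤ z i) (he₀ : 0 ≤ e) (he₁ : e ≤ 1) :
    ∑ i ∈ s, w i * z i ^ e ≤ (∑ i ∈ s, w i) ^ (1 - e) * (∑ i ∈ s, w i * z i) ^ e := by
  have jensen := (concaveOn_rpow he₀ he₁).le_map_centerMass hw hW hz
  simp only [centerMass, smul_eq_mul, Function.comp_def] at jensen
  rw [rpow_one_sub_mul_rpow_eq_mul_inv_mul_rpow hW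
    (sum_nonneg fun i hi => mul_nonneg (hw i hi) (hz i hi))]
  calc _ = (∑ i ∈ s, w i) * ((∑ i ∈ s, w i)⁻¹ * ∑ i ∈ s, w i * z i ^ e) := by field_simp
    _ ≤ _ := by gcongr

lemma rpow_sum_mul_le_sum_mul_rpow_of_nonpos (hw : ∀ i ∈ s, 0 ≤ w i) (hW : 0 < ∑ i ∈ s, w i)
    (hz : ∀ i ∈ s, 0 < z i) (he : e ≤ 0) :
    (∑ i ∈ s, w i) ^ (1 - e) * (∑ i ∈ s, w i * z i) ^ e ≤ ∑ i ∈ s, w i * z i ^ e := by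
  obtain ⟨k, hk, hwk⟩ := exists_lt_of_sum_lt (f := fun _ => (0 : ℝ)) (by simpa using hW)
  have hwz : 0 < ∑ i ∈ s, w i * z i :=
    sum_pos' (fun i hi => mul_nonneg (hw i hi) (hz i hi).le) ⟨k, hk, mul_pos hwk (hz k hk)⟩
  have dual := rpow_sum_mul_le_sum_mul_rpow_of_one_le
    (w := fun i => w i * z i) (z := fun i => (z i)⁻¹)
    (fun i hi => mul_nonneg (hw i hi) (hz i hi).le) hwz (fun i hi => (inv_pos.2 (hz i hi)).le)
    (by linarith : 1 ≤ 1 - e)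
  calc _ = (∑ i ∈ s, w i * z i) ^ (1 - (1 - e)) *
          (∑ i ∈ s, w i * z i * (z i)⁻¹) ^ (1 - e) := by
        rw [sub_sub_cancel, mul_comm]
        congr 2
        exact sum_congr rfl fun i hi => by field_simp [(hz i hi).ne']
    _ ≤ _ := dual
    _ = _ := sum_congr rfl fun i hi => by
        rw [inv_rpow (hz i hi).le, rpow_sub (hz i hi), rpow_one]
        field_simp [(hz i hi).ne']

lemma one_div_mul_log_div_nonneg {c a b : ℝ} (ha : 0 ≤ a) (hb : 0 < b) (h : 0 ≤ c * (a - b)) :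
    0 ≤ 1 / c * log (a / b) := by
  rcases lt_trichotomy c 0 with hc | rfl | hc
  · have hab : a ≤ b := sub_nonpos.1 (nonpos_of_mul_nonneg_right h hc)
    exact mul_nonneg_of_nonpos_of_nonpos (one_div_nonpos.2 hc.le)
      (log_nonpos (div_nonneg ha hb.le) ((div_le_one hb).2 hab))
  · simp
  · have hab : b ≤ a := sub_nonneg.1 (nonneg_of_mul_nonneg_right h hc)
    exact mul_nonneg (one_div_nonneg.2 hc.le) (log_nonneg ((one_le_div hb).2 hab))

end Real

/-- Nonnegativity of the generalized Rényi divergence for all admissible orders: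
for every real `α` with `α ≠ 0` and `α ≠ 1` (including negative `α`),
`R_α(p‖q) ≥ 0`. -/
theorem renyiDiv_nonneg (m : ℕ) (hm : 1 ≤ m) (p q : Fin m → ℝ)
    (hp : ∀ j, 0 < p j) (hq : ∀ j, 0 < q j)
    (α : ℝ) (hα0 : α ≠ 0) (hα1 : α ≠ 1) :
    0 ≤ renyiDiv m α p q := by
  have hne : (univ : Finset (Fin m)).Nonempty := ⟨⟨0, hm⟩, mem_univ _⟩
  have hr : ∀ j ∈ univ, 0 < q j / p j := fun j _ => div_pos (hq j) (hp j)
  have hP : 0 < ∑ j, p j := sum_pos (fun j _ => hp j) hne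
  have hS : 0 < ∑ j, p j * (q j / p j) ^ (1 - α) :=
    sum_pos (fun j hj => mul_pos (hp j) (rpow_pos_of_pos (hr j hj) _)) hne
  have hpw : ∀ j ∈ univ, 0 ≤ p j := fun j _ => (hp j).le
  have hQ : 0 ≤ ∑ j, p j * (q j / p j) :=
    sum_nonneg fun j hj => mul_nonneg (hpw j hj) (hr j hj).le
  unfold renyiDiv
  refine one_div_mul_log_div_nonneg (by positivity) hS ?_
  rcases lt_or_gt_of_ne hα0 with hneg | hpos
  · have jensen := rpow_sum_mul_le_sum_mul_rpow_of_one_le hpw hP (fun j hj => (hr j hj).le)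
      (by linarith : 1 ≤ 1 - α)
    rw [sub_sub_cancel] at jensen
    exact mul_nonneg_of_nonpos_of_nonpos (mul_neg_of_neg_of_pos hneg (by linarith)).le
      (sub_nonpos.2 jensen)
  rcases lt_or_gt_of_ne hα1 with hlt | hgt
  · have jensen := sum_mul_rpow_le_rpow_sum_mul_of_le_one hpw hP (fun j hj => (hr j hj).le)
      (by linarith : 0 ≤ 1 - α) (by linarith : 1 - α ≤ 1)
    rw [sub_sub_cancel] at jensen
    exact mul_nonneg (mul_pos hpos (by linarith)).le (sub_nonneg.2 jensen)
  · have jensen := rpow_sum_mul_le_sum_mul_rpow_of_nonpos hpw hP hr (by linarith : 1 - α ≤ 0)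
    rw [sub_sub_cancel] at jensen
    exact mul_nonneg_of_nonpos_of_nonpos (mul_neg_of_pos_of_neg hpos (by linarith)).le
      (sub_nonpos.2 jensen)
end

section
/- Monotonicity of the rescaled Rényi divergence: if 0 < α ≤ α′ with α ≠ 1 and α′ ≠ 1, then α·R_α(p ‖ q) ≤ α′·R_{α′}(p ‖ q). Hence α is an inequality-aversion parameter for α·R_α. -/
open Real Finset

section LogConvexity

variable {ι : Type*} [Fintype ι] {w b : ι → ℝ}

theorem sum_mul_rpow_convexComb_le (hw : ∀ i, 0 ≤ w i) (hb : ∀ i, 0 < b i) {a c : ℝ}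
    (ha : 0 < a) (hc : 0 ≤ c) (hac : a + c = 1) (x y : ℝ) :
    ∑ i, w i * b i ^ (a * x + c * y) ≤
      (∑ i, w i * b i ^ x) ^ a * (∑ i, w i * b i ^ y) ^ c := by
  obtain rfl : c = 1 - a := by linarith
  calc ∑ i, w i * b i ^ (a * x + (1 - a) * y)
      = ∑ i, w i * b i ^ y * b i ^ (a * (x - y)) := by
        refine sum_congr rfl fun i _ ↦ ?_
        rw [mul_assoc, ← rpow_add (hb i)]
        ring_nf
    _ ≤ (∑ i, w i * b i ^ y) ^ (1 - a⁻¹⁻¹) *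
          (∑ i, w i * b i ^ y * (b i ^ (a * (x - y))) ^ a⁻¹) ^ a⁻¹⁻¹ :=
        inner_le_weight_mul_Lp_of_nonneg univ ((one_le_inv₀ ha).2 (by linarith)) _ _
          (fun i ↦ mul_nonneg (hw i) (rpow_nonneg (hb i).le _)) (fun i ↦ rpow_nonneg (hb i).le _)
    _ = (∑ i, w i * b i ^ x) ^ a * (∑ i, w i * b i ^ y) ^ (1 - a) := by
        rw [inv_inv, mul_comm]
        congr 2
        refine sum_congr rfl fun i _ ↦ ?_
        rw [← rpow_mul (hb i).le, mul_comm a, mul_inv_cancel_right₀ ha.ne', mul_assoc,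
          ← rpow_add (hb i), add_sub_cancel]

theorem convexOn_log_sum_mul_rpow (hw : ∀ i, 0 < w i) (hb : ∀ i, 0 < b i) :
    ConvexOn ℝ Set.univ fun x : ℝ ↦ log (∑ i, w i * b i ^ x) := by
  cases isEmpty_or_nonempty ι
  · simpa using convexOn_const 0 convex_univ
  have hpos (x : ℝ) : 0 < ∑ i, w i * b i ^ x :=
    sum_pos (fun i _ ↦ mul_pos (hw i) (rpow_pos_of_pos (hb i) x)) univ_nonempty
  refine convexOn_iff_forall_pos.2 ⟨convex_univ, ?_⟩
  intro x _ y _ a c ha hc hac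
  calc log (∑ i, w i * b i ^ (a • x + c • y))
      ≤ log ((∑ i, w i * b i ^ x) ^ a * (∑ i, w i * b i ^ y) ^ c) :=
        log_le_log (hpos _) (sum_mul_rpow_convexComb_le (fun i ↦ (hw i).le) hb ha hc.le hac x y)
    _ = a • log (∑ i, w i * b i ^ x) + c • log (∑ i, w i * b i ^ y) := by
        rw [log_mul (rpow_pos_of_pos (hpos x) a).ne' (rpow_pos_of_pos (hpos y) c).ne',
          log_rpow (hpos x), log_rpow (hpos y)]
        rfl

end LogConvexity

/-- The Chernoff coefficient `∑ⱼ pⱼ^x qⱼ^(1-x)`, written so that it is a sum of exponentials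
in `x` with positive weights `q`. -/
noncomputable def chernoffCoeff {ι : Type*} [Fintype ι] (p q : ι → ℝ) (x : ℝ) : ℝ :=
  ∑ j, q j * (p j / q j) ^ x

lemma mul_div_rpow_one_sub {s t : ℝ} (hs : 0 < s) (ht : 0 < t) (x : ℝ) :
    s * (t / s) ^ (1 - x) = t * (s / t) ^ x := by
  rw [rpow_sub (div_pos ht hs), rpow_one, div_rpow ht.le hs.le, div_rpow hs.le ht.le]
  field_simp

lemma mul_renyiDiv_eq_secant (m : ℕ) {p q : Fin m → ℝ} (hp : ∀ j, 0 < p j) (hq : ∀ j, 0 < q j)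
    {α : ℝ} (hα1 : α ≠ 1) :
    α * renyiDiv m α p q =
      (log (chernoffCoeff p q α) - log (chernoffCoeff p q 1)) / (α - 1) +
        (log (chernoffCoeff p q 0) - log (chernoffCoeff p q 1)) := by
  cases isEmpty_or_nonempty (Fin m)
  · simp [renyiDiv, chernoffCoeff]
  have hP : 0 < ∑ j, p j := sum_pos (fun j _ ↦ hp j) univ_nonempty
  have hQ : 0 < ∑ j, q j := sum_pos (fun j _ ↦ hq j) univ_nonempty
  have hC : 0 < ∑ j, q j * (p j / q j) ^ α :=
    sum_pos (fun j _ ↦ mul_pos (hq j) (rpow_pos_of_pos (div_pos (hp j) (hq j)) α)) univ_nonempty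
  have hC0 : chernoffCoeff p q 0 = ∑ j, q j := by simp [chernoffCoeff]
  have hC1 : chernoffCoeff p q 1 = ∑ j, p j :=
    sum_congr rfl fun j _ ↦ by rw [rpow_one, mul_div_cancel₀ _ (hq j).ne']
  have hlog : log ((∑ j, p j) ^ α * (∑ j, p j * (q j / p j)) ^ (1 - α) /
      ∑ j, p j * (q j / p j) ^ (1 - α)) =
        α * log (chernoffCoeff p q 1) + (1 - α) * log (chernoffCoeff p q 0) -
          log (chernoffCoeff p q α) := by
    have hPQ : ∑ j, p j * (q j / p j) = ∑ j, q j :=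
      sum_congr rfl fun j _ ↦ mul_div_cancel₀ _ (hp j).ne'
    simp only [hPQ, mul_div_rpow_one_sub (hp _) (hq _), hC0, hC1]
    rw [log_div (by positivity) hC.ne', log_mul (by positivity) (by positivity), log_rpow hP,
      log_rpow hQ, chernoffCoeff]
  rw [renyiDiv, hlog]
  -- At `α = 0` both sides vanish: the left one through the junk value `1 / 0 = 0`.
  rcases eq_or_ne α 0 with rfl | hα0
  · simp only [zero_mul, zero_sub]
    ring
  · have : 1 - α ≠ 0 := sub_ne_zero.2 hα1.symm
    have : α - 1 ≠ 0 := sub_ne_zero.2 hα1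
    field_simp
    ring

theorem renyiDiv_rescaled_mono_general (m : ℕ) (p q : Fin m → ℝ)
    (hp : ∀ j, 0 < p j) (hq : ∀ j, 0 < q j)
    (α α' : ℝ) (hαα' : α ≤ α') (hα1 : α ≠ 1) (hα'1 : α' ≠ 1) :
    α * renyiDiv m α p q ≤ α' * renyiDiv m α' p q := by
  have hconv : ConvexOn ℝ Set.univ fun x ↦ log (chernoffCoeff p q x) :=
    convexOn_log_sum_mul_rpow hq fun j ↦ div_pos (hp j) (hq j)
  rw [mul_renyiDiv_eq_secant m hp hq hα1, mul_renyiDiv_eq_secant m hp hq hα'1]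
  gcongr ?_ + _
  exact hconv.secant_mono (Set.mem_univ 1) (Set.mem_univ α) (Set.mem_univ α') hα1 hα'1 hαα'

/-- Monotonicity of the rescaled Rényi divergence: if `0 < α ≤ α'` with
`α ≠ 1` and `α' ≠ 1`, then `α·R_α(p‖q) ≤ α'·R_{α'}(p‖q)`. -/
theorem renyiDiv_rescaled_mono (m : ℕ) (hm : 1 ≤ m) (p q : Fin m → ℝ)
    (hp : ∀ j, 0 < p j) (hq : ∀ j, 0 < q j)
    (α α' : ℝ) (hα : 0 < α) (hαα' : α ≤ α') (hα1 : α ≠ 1) (hα'1 : α' ≠ 1) :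
    α * renyiDiv m α p q ≤ α' * renyiDiv m α' p q :=
  renyiDiv_rescaled_mono_general m p q hp hq α α' hαα' hα1 hα'1
end

section
/- Limit of the generalized Rényi divergence as α → 1 (mean log deviation form): the limit as α tends to 1 (with α ≠ 0, 1) of R_α(p ‖ q) equals −Σ_j p̄_j · ln r̄_j, where p̄_j = p_j/Σ_k p_k, q̄_j = q_j/Σ_k q_k, and r̄_j = q̄_j/p̄_j. -/
/-!
Writing `p̄, r̄` for the normalized data, every term of the divergence rescales so that
`R_α(p‖q) = -log (∑ p̄_j r̄_j ^ (1 - α)) / (α (1 - α))`. Since `∑ p̄_j = 1`, the numerator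
`f α = -log (∑ p̄_j r̄_j ^ (1 - α))` vanishes at `α = 1`, so the quotient tends to `-f'(1)`,
and `f'(1) = ∑ p̄_j log r̄_j`.
-/

open Real Filter Topology

theorem tendsto_div_mul_one_sub_of_hasDerivAt {f : ℝ → ℝ} {D : ℝ} (hf : HasDerivAt f D 1)
    (hf1 : f 1 = 0) :
    Tendsto (fun α => f α / (α * (1 - α))) (𝓝[≠] 1) (𝓝 (-D)) := by
  have hinv : Tendsto (fun α : ℝ => α⁻¹) (𝓝[≠] 1) (𝓝 1) := by
    simpa using (tendsto_inv₀ (one_ne_zero' ℝ)).mono_left nhdsWithin_le_nhds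
  have hlim := hinv.mul (hasDerivAt_iff_tendsto_slope.mp hf).neg
  rw [one_mul] at hlim
  refine hlim.congr' ?_
  filter_upwards [self_mem_nhdsWithin, eventually_ne_nhdsWithin one_ne_zero] with α hα1 hα0
  have hα1' : α - 1 ≠ 0 := sub_ne_zero.mpr hα1
  have h1α : 1 - α ≠ 0 := sub_ne_zero.mpr (Ne.symm hα1)
  rw [slope_def_field, hf1]
  field_simp
  ring

section Sums

variable {ι : Type*} [Fintype ι]

theorem hasDerivAt_sum_mul_rpow_one_sub (w : ι → ℝ) {s : ι → ℝ} (hs : ∀ j, 0 < s j) (a : ℝ) :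
    HasDerivAt (fun α => ∑ j, w j * s j ^ (1 - α))
      (-∑ j, w j * (log (s j) * s j ^ (1 - a))) a := by
  rw [← Finset.sum_neg_distrib]
  refine HasDerivAt.fun_sum fun j _ => ?_
  exact ((((hasDerivAt_id' (x := a)).const_sub 1).const_rpow (hs j)).const_mul (w j)).congr_deriv
    (by ring)

theorem tendsto_neg_log_sum_mul_rpow_one_sub {w s : ι → ℝ} (hw : ∑ j, w j = 1)
    (hs : ∀ j, 0 < s j) :
    Tendsto (fun α => -log (∑ j, w j * s j ^ (1 - α)) / (α * (1 - α))) (𝓝[≠] 1)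
      (𝓝 (-∑ j, w j * log (s j))) := by
  have hderiv := ((hasDerivAt_sum_mul_rpow_one_sub w hs 1).log (by simp [hw])).fun_neg
  simp only [sub_self, rpow_zero, mul_one, hw, div_one, neg_neg] at hderiv
  exact tendsto_div_mul_one_sub_of_hasDerivAt hderiv (by simp [hw])

theorem sum_mul_rpow_div_eq_mul_sum_normalized [Nonempty ι] {p q : ι → ℝ}
    (hp : ∀ j, 0 < p j) (hq : ∀ j, 0 < q j) (β : ℝ) :
    ∑ j, p j * (q j / p j) ^ β = (∑ k, p k) ^ (1 - β) * (∑ k, q k) ^ β *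
      ∑ j, (p j / ∑ k, p k) * ((q j / ∑ k, q k) / (p j / ∑ k, p k)) ^ β := by
  have hP : 0 < ∑ k, p k := Finset.sum_pos (fun j _ => hp j) Finset.univ_nonempty
  have hQ : 0 < ∑ k, q k := Finset.sum_pos (fun j _ => hq j) Finset.univ_nonempty
  rw [Finset.mul_sum]
  refine Finset.sum_congr rfl fun j _ => ?_
  have hr : (q j / ∑ k, q k) / (p j / ∑ k, p k) = q j / p j * ((∑ k, p k) / ∑ k, q k) := by
    field_simp [(hp j).ne']
  rw [hr, mul_rpow (div_pos (hq j) (hp j)).le (div_pos hP hQ).le, div_rpow hP.le hQ.le,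
    rpow_sub hP, rpow_one]
  field_simp [(rpow_pos_of_pos hQ β).ne', (rpow_pos_of_pos hP β).ne']

end Sums

theorem renyiDiv_eq_neg_log_sum_normalized {m : ℕ} (hm : 1 ≤ m) {p q : Fin m → ℝ}
    (hp : ∀ j, 0 < p j) (hq : ∀ j, 0 < q j) (α : ℝ) :
    renyiDiv m α p q = -log (∑ j, (p j / ∑ k, p k) *
      ((q j / ∑ k, q k) / (p j / ∑ k, p k)) ^ (1 - α)) / (α * (1 - α)) := by
  have : Nonempty (Fin m) := ⟨⟨0, hm⟩⟩
  have hQ : ∑ j, p j * (q j / p j) = ∑ k, q k :=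
    Finset.sum_congr rfl fun j _ => mul_div_cancel₀ _ (hp j).ne'
  have hscale : 0 < (∑ k, p k) ^ α * (∑ k, q k) ^ (1 - α) :=
    mul_pos (rpow_pos_of_pos (Finset.sum_pos (fun j _ => hp j) Finset.univ_nonempty) α)
      (rpow_pos_of_pos (Finset.sum_pos (fun j _ => hq j) Finset.univ_nonempty) _)
  rw [renyiDiv, hQ, sum_mul_rpow_div_eq_mul_sum_normalized hp hq, sub_sub_cancel,
    div_mul_cancel_left₀ hscale.ne', log_inv, one_div_mul_eq_div]

/-- Limit of the generalized Rényi divergence as `α → 1` (mean log deviation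
form): as `α` tends to `1` with `α ≠ 0, 1`, `R_α(p‖q)` tends to
`−Σ_j p̄_j ln r̄_j`, where `p̄_j = p_j/Σ p`, `q̄_j = q_j/Σ q`, `r̄_j = q̄_j/p̄_j`. -/
theorem renyiDiv_tendsto_one (m : ℕ) (hm : 1 ≤ m) (p q : Fin m → ℝ)
    (hp : ∀ j, 0 < p j) (hq : ∀ j, 0 < q j) :
    Filter.Tendsto (fun α : ℝ => renyiDiv m α p q)
      (nhdsWithin 1 {α : ℝ | α ≠ 0 ∧ α ≠ 1})
      (nhds (-(∑ j, (p j / ∑ k, p k) *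
        Real.log ((q j / ∑ k, q k) / (p j / ∑ k, p k))))) := by
  have : Nonempty (Fin m) := ⟨⟨0, hm⟩⟩
  have hP : 0 < ∑ k, p k := Finset.sum_pos (fun j _ => hp j) Finset.univ_nonempty
  have hQ : 0 < ∑ k, q k := Finset.sum_pos (fun j _ => hq j) Finset.univ_nonempty
  have hw : ∑ j, p j / ∑ k, p k = 1 := by rw [← Finset.sum_div, div_self hP.ne']
  have hs j : 0 < (q j / ∑ k, q k) / (p j / ∑ k, p k) :=
    div_pos (div_pos (hq j) hQ) (div_pos (hp j) hP)
  simp_rw [renyiDiv_eq_neg_log_sum_normalized hm hp hq]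
  exact (tendsto_neg_log_sum_mul_rpow_one_sub hw hs).mono_left
    (nhdsWithin_mono 1 fun α hα => hα.2)
end

section
/- Monotonicity of the rescaled symmetrized Rényi index: if 1/2 ≤ α ≤ α′ with α ≠ 1 and α′ ≠ 1, then α·SR_α(p, q) ≤ α′·SR_{α′}(p, q). Hence α is a disparity-aversion parameter for the standardized symmetrized Rényi index on α ≥ 1/2. -/
/-- Symmetrized Rényi index `SR_α(p,q) = (R_α(p‖q) + R_{1−α}(p‖q))/2`. -/
noncomputable def symRenyi (m : ℕ) (α : ℝ) (p q : Fin m → ℝ) : ℝ :=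
  (renyiDiv m α p q + renyiDiv m (1 - α) p q) / 2

/-! By Hölder's inequality `t ↦ log ∑ⱼ pⱼ rⱼ^t` is convex, hence so is its symmetrization
`g t = log ∑ⱼ pⱼ rⱼ^t + log ∑ⱼ pⱼ rⱼ^(1-t)`. Expanding the logarithms in `R_α` and `R_{1-α}`
gives `α · SR_α = (g α - g 1) / (2 (α - 1))`, half the slope of the secant of `g` through `1`,
and secant slopes of a convex function are monotone. -/

open Finset Real

theorem Real.sum_rpow_mul_rpow_le {ι : Type*} (s : Finset ι) {f g : ι → ℝ}
    (hf : ∀ i ∈ s, 0 ≤ f i) (hg : ∀ i ∈ s, 0 ≤ g i) {a b : ℝ} (ha : 0 < a) (hb : 0 < b)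
    (hab : a + b = 1) :
    ∑ i ∈ s, f i ^ a * g i ^ b ≤ (∑ i ∈ s, f i) ^ a * (∑ i ∈ s, g i) ^ b := by
  have h := inner_le_Lp_mul_Lq_of_nonneg s (HolderConjugate.inv_inv ha hb hab)
    (fun i hi => rpow_nonneg (hf i hi) a) (fun i hi => rpow_nonneg (hg i hi) b)
  simp only [one_div, inv_inv] at h
  convert h using 3 <;> refine sum_congr rfl fun i hi => ?_
  · rw [← rpow_mul (hf i hi), mul_inv_cancel₀ ha.ne', rpow_one]
  · rw [← rpow_mul (hg i hi), mul_inv_cancel₀ hb.ne', rpow_one]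

theorem convexOn_log_sum_mul_rpow_s12 {ι : Type*} {s : Finset ι} (hs : s.Nonempty) {w r : ι → ℝ}
    (hw : ∀ i ∈ s, 0 < w i) (hr : ∀ i ∈ s, 0 < r i) :
    ConvexOn ℝ Set.univ fun t : ℝ => log (∑ i ∈ s, w i * r i ^ t) := by
  have hterm : ∀ t : ℝ, ∀ i ∈ s, 0 < w i * r i ^ t := fun t i hi =>
    mul_pos (hw i hi) (rpow_pos_of_pos (hr i hi) t)
  have hsum : ∀ t : ℝ, 0 < ∑ i ∈ s, w i * r i ^ t := fun t => sum_pos (hterm t) hs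
  refine convexOn_iff_forall_pos.2 ⟨convex_univ, fun x _ y _ a b ha hb hab => ?_⟩
  have hsplit : ∀ i ∈ s,
      w i * r i ^ (a • x + b • y) = (w i * r i ^ x) ^ a * (w i * r i ^ y) ^ b := by
    intro i hi
    have hr0 := (hr i hi).le
    rw [mul_rpow (hw i hi).le (rpow_nonneg hr0 x), mul_rpow (hw i hi).le (rpow_nonneg hr0 y),
      ← rpow_mul hr0, ← rpow_mul hr0, mul_mul_mul_comm, ← rpow_add (hw i hi), hab, rpow_one,
      ← rpow_add (hr i hi), smul_eq_mul, smul_eq_mul, mul_comm a, mul_comm b]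
  have holder : ∑ i ∈ s, w i * r i ^ (a • x + b • y) ≤
      (∑ i ∈ s, w i * r i ^ x) ^ a * (∑ i ∈ s, w i * r i ^ y) ^ b := by
    rw [sum_congr rfl hsplit]
    exact sum_rpow_mul_rpow_le s (fun i hi => (hterm x i hi).le) (fun i hi => (hterm y i hi).le)
      ha hb hab
  calc log (∑ i ∈ s, w i * r i ^ (a • x + b • y))
      ≤ log ((∑ i ∈ s, w i * r i ^ x) ^ a * (∑ i ∈ s, w i * r i ^ y) ^ b) :=
        log_le_log (hsum _) holder
    _ = a • log (∑ i ∈ s, w i * r i ^ x) + b • log (∑ i ∈ s, w i * r i ^ y) := by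
        rw [log_mul (rpow_pos_of_pos (hsum x) a).ne' (rpow_pos_of_pos (hsum y) b).ne',
          log_rpow (hsum x), log_rpow (hsum y), smul_eq_mul, smul_eq_mul]

noncomputable def renyiMoment (m : ℕ) (p q : Fin m → ℝ) (t : ℝ) : ℝ :=
  ∑ j, p j * (q j / p j) ^ t

noncomputable def symLogMoment (m : ℕ) (p q : Fin m → ℝ) (t : ℝ) : ℝ :=
  log (renyiMoment m p q t) + log (renyiMoment m p q (1 - t))

section Renyi

variable {m : ℕ} {p q : Fin m → ℝ}

lemma renyiMoment_zero : renyiMoment m p q 0 = ∑ j, p j := by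
  simp [renyiMoment]

lemma renyiMoment_one : renyiMoment m p q 1 = ∑ j, p j * (q j / p j) := by
  simp [renyiMoment]

lemma symLogMoment_one_sub (t : ℝ) : symLogMoment m p q (1 - t) = symLogMoment m p q t := by
  rw [symLogMoment, symLogMoment, sub_sub_cancel, add_comm]

lemma renyiMoment_pos (hm : 1 ≤ m) (hp : ∀ j, 0 < p j) (hq : ∀ j, 0 < q j) (t : ℝ) :
    0 < renyiMoment m p q t :=
  sum_pos (fun j _ => mul_pos (hp j) (rpow_pos_of_pos (div_pos (hq j) (hp j)) t))
    ⟨⟨0, hm⟩, mem_univ _⟩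

lemma convexOn_symLogMoment (hm : 1 ≤ m) (hp : ∀ j, 0 < p j) (hq : ∀ j, 0 < q j) :
    ConvexOn ℝ Set.univ (symLogMoment m p q) := by
  have h := convexOn_log_sum_mul_rpow_s12 (univ_nonempty_iff.2 ⟨⟨0, hm⟩⟩) (fun j _ => hp j)
    (fun j _ => div_pos (hq j) (hp j))
  exact h.add (h.comp_affineMap (AffineMap.const ℝ ℝ (1 : ℝ) - AffineMap.id ℝ ℝ))

-- Also at `α = 0` and `α = 1`, where both sides are junk values `x / 0 = 0`.
lemma renyiDiv_eq (hm : 1 ≤ m) (hp : ∀ j, 0 < p j) (hq : ∀ j, 0 < q j) (α : ℝ) :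
    renyiDiv m α p q = (α * log (renyiMoment m p q 0) + (1 - α) * log (renyiMoment m p q 1)
      - log (renyiMoment m p q (1 - α))) / (α * (1 - α)) := by
  have h0 := renyiMoment_pos hm hp hq 0
  have h1 := renyiMoment_pos hm hp hq 1
  have h1α := renyiMoment_pos hm hp hq (1 - α)
  rw [renyiMoment_zero] at h0 ⊢
  rw [renyiMoment_one] at h1 ⊢
  unfold renyiMoment at h1α ⊢
  rw [renyiDiv, log_div (by positivity) h1α.ne', log_mul (by positivity) (by positivity),
    log_rpow h0, log_rpow h1]
  ring

lemma symRenyi_eq (hm : 1 ≤ m) (hp : ∀ j, 0 < p j) (hq : ∀ j, 0 < q j) (α : ℝ) :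
    symRenyi m α p q = (symLogMoment m p q 1 - symLogMoment m p q α) / (α * (1 - α)) / 2 := by
  rw [symRenyi, renyiDiv_eq hm hp hq, renyiDiv_eq hm hp hq, symLogMoment, symLogMoment,
    sub_self, sub_sub_cancel]
  ring

lemma mul_symRenyi_eq_slope (hm : 1 ≤ m) (hp : ∀ j, 0 < p j) (hq : ∀ j, 0 < q j)
    {α : ℝ} (hα : α ≠ 1) :
    α * symRenyi m α p q = (symLogMoment m p q α - symLogMoment m p q 1) / (α - 1) / 2 := by
  rcases eq_or_ne α 0 with rfl | hα0
  · rw [zero_mul, ← sub_zero 1, symLogMoment_one_sub]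
    simp
  have : α - 1 ≠ 0 := sub_ne_zero.2 hα
  have : 1 - α ≠ 0 := sub_ne_zero.2 hα.symm
  rw [symRenyi_eq hm hp hq]
  field_simp
  ring

end Renyi

theorem symRenyi_rescaled_mono_general (m : ℕ) (hm : 1 ≤ m) (p q : Fin m → ℝ)
    (hp : ∀ j, 0 < p j) (hq : ∀ j, 0 < q j)
    (α α' : ℝ) (hαα' : α ≤ α')
    (hα1 : α ≠ 1) (hα'1 : α' ≠ 1) :
    α * symRenyi m α p q ≤ α' * symRenyi m α' p q := by
  rw [mul_symRenyi_eq_slope hm hp hq hα1, mul_symRenyi_eq_slope hm hp hq hα'1]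
  have hslope := (convexOn_symLogMoment hm hp hq).secant_mono (Set.mem_univ 1) (Set.mem_univ α)
    (Set.mem_univ α') hα1 hα'1 hαα'
  linarith

/-- Monotonicity of the rescaled symmetrized Rényi index: if `1/2 ≤ α ≤ α'`
with `α ≠ 1` and `α' ≠ 1`, then `α·SR_α(p,q) ≤ α'·SR_{α'}(p,q)`. -/
theorem symRenyi_rescaled_mono (m : ℕ) (hm : 1 ≤ m) (p q : Fin m → ℝ)
    (hp : ∀ j, 0 < p j) (hq : ∀ j, 0 < q j)
    (α α' : ℝ) (hα : (1 : ℝ) / 2 ≤ α) (hαα' : α ≤ α')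
    (hα1 : α ≠ 1) (hα'1 : α' ≠ 1) :
    α * symRenyi m α p q ≤ α' * symRenyi m α' p q :=
  symRenyi_rescaled_mono_general m hm p q hp hq α α' hαα' hα1 hα'1
end
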